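/- For all positive integers r and i and every linear order ≪ on the vertices of the rooted tree T^r_i, the First-Fit coloring of T^r_i in order ≪ uses at most i colors, i.e., χ_FF(T^r_i,≪) ≤ i. -/

import Mathlib

noncomputable def ffAux {V : Type*} (G : SimpleGraph V) (ord : V → ℕ) (t : ℕ) (v : V) : ℕ :=
  sInf {i : ℕ | 0 < i ∧ ∀ u, G.Adj u v → ∀ h : ord u < t, ffAux G ord (ord u) u ≠ i}
termination_by t
decreasing_by exact h

/-- The color that First-Fit assigns to vertex `v` when coloring `G` in the
presentation order in which `u` comes before `w` iff `ord u < ord w`. -/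
noncomputable def ffColor {V : Type*} (G : SimpleGraph V) (ord : V → ℕ) (v : V) : ℕ :=
  ffAux G ord (ord v) v

/-- The number of colors used by First-Fit on `G` in the order given by `ord`. -/
noncomputable def ffNumColors {V : Type*} [Fintype V] (G : SimpleGraph V) (ord : V → ℕ) : ℕ :=
  (Finset.univ.image (ffColor G ord)).card

/-- Expected number of colors used by First-Fit on `G` in a uniformly random order. -/
noncomputable def ffExpect {V : Type*} [Fintype V] (G : SimpleGraph V) : ℝ :=
  letI := Classical.decEq V
  (∑ e : V ≃ Fin (Fintype.card V), (ffNumColors G (fun v => (e v : ℕ)) : ℝ)) /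
    (Nat.factorial (Fintype.card V) : ℝ)

/-- Expected value of χ_FF(G,≪)/χ(G) over a uniformly random order ≪. -/
noncomputable def ffRatioExpect {V : Type*} [Fintype V] (G : SimpleGraph V) : ℝ :=
  letI := Classical.decEq V
  (∑ e : V ≃ Fin (Fintype.card V),
      (ffNumColors G (fun v => (e v : ℕ)) : ℝ) / (G.chromaticNumber.toNat : ℝ)) /
    (Nat.factorial (Fintype.card V) : ℝ)

/-- Probability, over a uniformly random presentation order of the vertex set `V`,
of the event `P` (a property of the position function of the order). -/
noncomputable def ffProb {V : Type*} [Fintype V] (P : (V → ℕ) → Prop) : ℝ :=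
  letI := Classical.decEq V
  letI := Classical.decPred (fun e : V ≃ Fin (Fintype.card V) => P (fun v => (e v : ℕ)))
  ((Finset.univ.filter (fun e : V ≃ Fin (Fintype.card V) => P (fun v => (e v : ℕ)))).card : ℝ) /
    (Nat.factorial (Fintype.card V) : ℝ)

/-- `RFF n`: the maximum over all forests on `n` vertices of the expected value of
χ_FF(T,≪)/χ(T) over a uniformly random order ≪. -/
noncomputable def RFF (n : ℕ) : ℝ :=
  sSup {x : ℝ | ∃ G : SimpleGraph (Fin n), G.IsAcyclic ∧ x = ffRatioExpect G}

/-- `l` is a bidirected (simple) path in the orientation of `G` induced by `ord`. -/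
def IsBidirected {V : Type*} (G : SimpleGraph V) (ord : V → ℕ) (l : List V) : Prop :=
  l.Nodup ∧ ∃ (l₁ l₂ : List V) (m : V), l = l₁ ++ m :: l₂ ∧
    List.Chain' (fun a b => G.Adj a b ∧ ord a < ord b) (l₁ ++ [m]) ∧
    List.Chain' (fun a b => G.Adj a b ∧ ord b < ord a) (m :: l₂)

/-- Vertices of the tree `T^r_i`: lists of pairs `(j,q)` with strictly decreasing
positive first coordinates, starting below `i`. -/
def TVert (r i : ℕ) : Type :=
  {l : List (Fin i × Fin r) //
    List.Chain (fun a b => b < a) i (l.map fun p => (p.1 : ℕ)) ∧ ∀ p ∈ l, 1 ≤ (p.1 : ℕ)}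

/-- The root of `T^r_i`. -/
def TRoot (r i : ℕ) : TVert r i := ⟨[], List.Chain.nil, by simp⟩

/-- The tree `T^r_i`: a vertex is adjacent to each of its one-step extensions. -/
def TGraph (r i : ℕ) : SimpleGraph (TVert r i) :=
  SimpleGraph.fromRel (fun u v => ∃ x, v.val = u.val ++ [x])

instance (r i : ℕ) : Finite (TVert r i) := by
  have hinj : Function.Injective
      (fun v : TVert r i => (⟨v.val, by
        have h := v.property.1
        haveI : IsTrans ℕ (fun a b => b < a) := ⟨fun a b c h1 h2 => lt_trans h2 h1⟩
        change List.IsChain _ (_ :: _) at h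
        rw [List.isChain_iff_pairwise] at h
        have h2 := (List.pairwise_cons.mp h).2
        exact List.Nodup.of_map _ (h2.imp fun hab => (ne_of_lt hab).symm)⟩ :
        {l : List (Fin i × Fin r) // l.Nodup})) :=
    fun a b hab => Subtype.ext (Subtype.mk_eq_mk.mp hab)
  exact Finite.of_injective _ hinj

noncomputable instance (r i : ℕ) : Fintype (TVert r i) := Fintype.ofFinite _

section Aux

lemma ffColor_eq {V : Type*} (G : SimpleGraph V) (ord : V → ℕ) (v : V) :
    ffColor G ord v = sInf {c : ℕ | 0 < c ∧ ∀ u, G.Adj u v → ord u < ord v → ffColor G ord u ≠ c} := by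
  rw [ffColor, ffAux]; rfl

lemma ffColor_pos {V : Type*} [Fintype V] (G : SimpleGraph V) (ord : V → ℕ) (v : V) :
    0 < ffColor G ord v := by
  classical
  rw [ffColor_eq]
  have hm : (1 + Finset.univ.sup (ffColor G ord)) ∈
      {c : ℕ | 0 < c ∧ ∀ u, G.Adj u v → ord u < ord v → ffColor G ord u ≠ c} := by
    refine ⟨by omega, fun u _ _ => ?_⟩
    have : ffColor G ord u ≤ Finset.univ.sup (ffColor G ord) :=
      Finset.le_sup (Finset.mem_univ u)
    omega
  exact (Nat.sInf_mem ⟨_, hm⟩).1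

/-- The level of a vertex of `T^r_i`: `i` for the root, otherwise the first coordinate of the
last entry of its list. -/
def lev {r i : ℕ} (v : TVert r i) : ℕ :=
  (v.val.getLast?.map fun p => (p.1 : ℕ)).getD i

lemma lev_pos {r i : ℕ} (hi : 1 ≤ i) (v : TVert r i) : 1 ≤ lev v := by
  rcases hl : v.val.getLast? with _ | p
  · simp [lev, hl, hi]
  · have hm : p ∈ v.val := by
      rcases List.mem_getLast?_eq_getLast (l := v.val) (x := p) (by rw [hl]; rfl) with ⟨h, rfl⟩
      exact List.getLast_mem h
    have := v.property.2 p hm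
    simp [lev, hl, this]

lemma lev_le {r i : ℕ} (v : TVert r i) : lev v ≤ i := by
  rcases hl : v.val.getLast? with _ | p
  · simp [lev, hl]
  · simp only [lev, hl, Option.map_some, Option.getD_some]
    exact (p.1.isLt).le

lemma chain_last_lt {i r : ℕ} (x : Fin i × Fin r) :
    ∀ (l : List (Fin i × Fin r)) (a : ℕ),
      List.Chain (fun a b => b < a) a ((l ++ [x]).map fun p => (p.1 : ℕ)) →
      (x.1 : ℕ) < (l.getLast?.map fun p => (p.1 : ℕ)).getD a := by
  intro l
  induction l with
  | nil =>
    intro a h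
    simp only [List.nil_append, List.map_cons, List.map_nil, List.chain_cons, List.isChain_cons_cons] at h
    simpa using (List.isChain_cons_cons.mp h).1
  | cons q t ih =>
    intro a h
    simp only [List.cons_append, List.map_cons, List.chain_cons, List.isChain_cons_cons] at h
    have hih := ih (q.1 : ℕ) (List.isChain_cons_cons.mp h).2
    rcases t with _ | ⟨p, t'⟩
    · simpa [List.getLast?] using hih
    · rw [List.getLast?_cons_cons]
      have hne : (p :: t').getLast? ≠ none := by
        simp [List.getLast?_eq_none_iff]
      rcases ho : (p :: t').getLast? with _ | w
      · exact absurd ho hne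
      · simpa [ho] using hih

/-- If `v = u ++ [x]` then `lev v = x.1 < lev u`. -/
lemma lev_child {r i : ℕ} (u v : TVert r i) (x : Fin i × Fin r)
    (h : v.val = u.val ++ [x]) : lev v = (x.1 : ℕ) ∧ lev v < lev u := by
  have h1 : lev v = (x.1 : ℕ) := by
    simp [lev, h]
  refine ⟨h1, ?_⟩
  rw [h1]
  have hc := v.property.1
  rw [h] at hc
  exact chain_last_lt x u.val i hc

lemma parent_unique {r i : ℕ} (v p p' : TVert r i) (x x' : Fin i × Fin r)
    (h : v.val = p.val ++ [x]) (h' : v.val = p'.val ++ [x']) : p = p' := by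
  apply Subtype.ext
  have := h.symm.trans h'
  have h2 := congrArg List.dropLast this
  simpa using h2

lemma adj_iff {r i : ℕ} (u v : TVert r i) :
    (TGraph r i).Adj u v ↔ u ≠ v ∧
      ((∃ x, v.val = u.val ++ [x]) ∨ (∃ x, u.val = v.val ++ [x])) := by
  rw [TGraph, SimpleGraph.fromRel_adj]

end Aux

section Main

variable {r i : ℕ}

lemma claimA (hi : 1 ≤ i) (ord : TVert r i → ℕ) :
    ∀ n (v : TVert r i), lev v = n →
      (∀ (p : TVert r i) x, v.val = p.val ++ [x] → ord v < ord p) →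
      ffColor (TGraph r i) ord v ≤ lev v := by
  intro n
  induction n using Nat.strong_induction_on with
  | _ n ih =>
    intro v hn hpar
    rw [ffColor_eq]
    apply Nat.sInf_le
    refine ⟨lev_pos hi v, fun u hadj hlt => ?_⟩
    rcases (adj_iff u v).mp hadj with ⟨hne, hx | hx⟩
    · rcases hx with ⟨x, hx⟩
      exact absurd (hpar u x hx) (by omega)
    · rcases hx with ⟨x, hx⟩
      have hlev := lev_child v u x hx
      have hu : ffColor (TGraph r i) ord u ≤ lev u := by
        refine ih (lev u) (by omega) u rfl ?_
        intro p y hy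
        have : p = v := parent_unique u p v y x hy hx
        subst this
        exact hlt
      omega

lemma claimB (hi : 1 ≤ i) (ord : TVert r i → ℕ) (hord : Function.Injective ord)
    (v : TVert r i) : ffColor (TGraph r i) ord v ≤ i := by
  by_cases hpar : ∀ (p : TVert r i) x, v.val = p.val ++ [x] → ord v < ord p
  · exact (claimA hi ord (lev v) v rfl hpar).trans (lev_le v)
  · push_neg at hpar
    rcases hpar with ⟨p, x, hx, hle⟩
    have hpv : p ≠ v := by
      intro h
      have := congrArg List.length hx
      rw [h] at this
      simp at this
    have hlt : ord p < ord v := lt_of_le_of_ne hle fun h => hpv (hord h)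
    have hlevv : lev v < i := by
      have := (lev_child p v x hx).1
      rw [this]
      exact x.1.isLt
    -- choose c = lev v or lev v + 1, whichever differs from the parent's color
    set cp := ffColor (TGraph r i) ord p with hcp
    set c : ℕ := if cp = lev v then lev v + 1 else lev v with hc
    have hcpos : 0 < c := by
      have := lev_pos hi v
      rw [hc]; split <;> omega
    have hcle : c ≤ i := by
      rw [hc]; split <;> omega
    have hcne : cp ≠ c := by
      rw [hc]; split <;> omega
    have hcge : lev v ≤ c := by
      rw [hc]; split <;> omega
    refine le_trans ?_ hcle
    rw [ffColor_eq]
    apply Nat.sInf_le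
    refine ⟨hcpos, fun u hadj hult => ?_⟩
    rcases (adj_iff u v).mp hadj with ⟨hne, hy | hy⟩
    · -- u is the parent of v, so u = p
      rcases hy with ⟨y, hy⟩
      have : u = p := parent_unique v u p y x hy hx
      subst this
      exact hcne
    · -- u is a child of v
      rcases hy with ⟨y, hy⟩
      have hlev := lev_child v u y hy
      have hu : ffColor (TGraph r i) ord u ≤ lev u := by
        refine claimA hi ord (lev u) u rfl ?_
        intro q z hz
        have : q = v := parent_unique u q v z y hz hy
        subst this
        exact hult
      omega

end Main

/-- For all positive integers `r`, `i` and every presentation order of `T^r_i` (given by an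
injective position function), First-Fit uses at most `i` colors on `T^r_i`. -/
theorem tree_ff_num_colors_le (r i : ℕ) (hr : 1 ≤ r) (hi : 1 ≤ i)
    (ord : TVert r i → ℕ) (hord : Function.Injective ord) :
    ffNumColors (TGraph r i) ord ≤ i := by
  classical
  have hsub : Finset.univ.image (ffColor (TGraph r i) ord) ⊆ Finset.Icc 1 i := by
    intro c hc
    rcases Finset.mem_image.mp hc with ⟨v, _, rfl⟩
    exact Finset.mem_Icc.mpr ⟨ffColor_pos _ _ v, claimB hi ord hord v⟩
  calc ffNumColors (TGraph r i) ord = (Finset.univ.image (ffColor (TGraph r i) ord)).card := rfl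
    _ ≤ (Finset.Icc 1 i).card := Finset.card_le_card hsub
    _ = i := by rw [Nat.card_Icc]; omega
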